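/- arXiv:1302.3971 — 3 statements merged into one kernel-verified Lean document; each statement's English description precedes it below -/
import Mathlib

section
/- Let P¹ = (p_i¹) and P² = (p_i²) be feedback families and let λ ∈ (0,1). Then there exists a feedback family P = (p_i) whose causally conditioned kernel is the pointwise convex combination, i.e. ←P_{0,n}(· | y^{n-1}) = λ ←P¹_{0,n}(· | y^{n-1}) + (1−λ) ←P²_{0,n}(· | y^{n-1}) for every y^{n-1} ∈ Y_{0,n-1}. Likewise, for any two forward families Q¹, Q² and any λ ∈ (0,1) there exists a forward family Q with →Q_{0,n}(· | x^n) = λ →Q¹_{0,n}(· | x^n) + (1−λ) →Q²_{0,n}(· | x^n) for every x^n ∈ X_{0,n}. In other words, the set of causally conditioned kernels arising from feedback families and the set arising from forward families are both convex. -/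
open MeasureTheory ProbabilityTheory Filter
open scoped ENNReal NNReal

namespace PaperDI

lemma measurable_finSnoc {Z : ℕ → Type*} [∀ i, MeasurableSpace (Z i)] (k : ℕ) :
    Measurable (fun p : (∀ j : Fin k, Z j) × Z k =>
      (Fin.snoc p.1 p.2 : ∀ j : Fin (k + 1), Z j)) := by
  apply measurable_pi_lambda
  intro j
  induction j using Fin.lastCases with
  | last => simpa using measurable_snd
  | cast i =>
    simp only [Fin.snoc_castSucc]
    exact (measurable_pi_apply i).comp measurable_fst

/-- Restriction of a prefix of length `k+1` to the prefix of length `k`. -/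
def restr {Z : ℕ → Type*} (k : ℕ) (z : ∀ j : Fin (k + 1), Z j) : ∀ j : Fin k, Z j :=
  fun j => z j.castSucc

lemma measurable_restr {Z : ℕ → Type*} [∀ i, MeasurableSpace (Z i)] (k : ℕ) :
    Measurable (restr (Z := Z) k) :=
  measurable_pi_lambda _ fun _ => measurable_pi_apply _

variable (X Y : ℕ → Type*) [∀ i, MeasurableSpace (X i)] [∀ i, MeasurableSpace (Y i)]

/-- A feedback family `(p_0, …, p_n)`: `p_0` is a probability measure on `X_0` (a Markov
kernel from the one-point space of empty prefixes) and `p_i` is a Markov kernel from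
`X_{0,i-1} × Y_{0,i-1}` to `X_i`. -/
structure FeedbackFamily (n : ℕ) where
  p : ∀ i : Fin (n + 1), Kernel ((∀ j : Fin (i : ℕ), X j) × (∀ j : Fin (i : ℕ), Y j)) (X i)
  markov : ∀ i, IsMarkovKernel (p i)

/-- A forward family `(q_0, …, q_n)`: `q_i` is a Markov kernel from
`Y_{0,i-1} × X_{0,i}` to `Y_i`. -/
structure ForwardFamily (n : ℕ) where
  q : ∀ i : Fin (n + 1), Kernel ((∀ j : Fin (i : ℕ), Y j) × (∀ j : Fin ((i : ℕ) + 1), X j)) (Y i)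
  markov : ∀ i, IsMarkovKernel (q i)

variable {X Y} {n : ℕ}

/-- The causally conditioned kernel `←P_{0,k}` from `Y_{0,k-1}` to `X_{0,k}`. -/
noncomputable def back (P : FeedbackFamily X Y n) :
    (k : ℕ) → k ≤ n → Kernel (∀ j : Fin k, Y j) (∀ j : Fin (k + 1), X j)
  | 0, _ =>
      Kernel.map ((P.p ⟨0, Nat.succ_pos n⟩).comap (fun _ => default) measurable_const)
        (fun x0 => (Fin.snoc default x0 : ∀ j : Fin 1, X j))
  | (k + 1), h =>
      Kernel.map
        (((back P k (by omega)).comap (restr k) (measurable_restr k)) ⊗ₖ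
          ((P.p ⟨k + 1, by omega⟩).comap
            (fun t : (∀ j : Fin (k + 1), Y j) × (∀ j : Fin (k + 1), X j) => (t.2, t.1))
            (measurable_snd.prodMk measurable_fst)))
        (fun t : (∀ j : Fin (k + 1), X j) × X (k + 1) =>
          (Fin.snoc t.1 t.2 : ∀ j : Fin (k + 2), X j))

/-- The causally conditioned kernel `→Q_{0,k}` from `X_{0,k}` to `Y_{0,k}`. -/
noncomputable def fwd (Q : ForwardFamily X Y n) :
    (k : ℕ) → k ≤ n → Kernel (∀ j : Fin (k + 1), X j) (∀ j : Fin (k + 1), Y j)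
  | 0, _ =>
      Kernel.map ((Q.q ⟨0, Nat.succ_pos n⟩).comap (fun x => (default, x))
          (measurable_const.prodMk measurable_id))
        (fun y0 => (Fin.snoc default y0 : ∀ j : Fin 1, Y j))
  | (k + 1), h =>
      Kernel.map
        (((fwd Q k (by omega)).comap (restr (k + 1)) (measurable_restr (k + 1))) ⊗ₖ
          ((Q.q ⟨k + 1, by omega⟩).comap
            (fun t : (∀ j : Fin (k + 2), X j) × (∀ j : Fin (k + 1), Y j) => (t.2, t.1))
            (measurable_snd.prodMk measurable_fst)))
        (fun t : (∀ j : Fin (k + 1), Y j) × Y (k + 1) =>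
          (Fin.snoc t.1 t.2 : ∀ j : Fin (k + 2), Y j))

/-- The interleaved joint measure of `←P ⊗ →Q` on prefixes of length `k`. -/
noncomputable def jointAux (P : FeedbackFamily X Y n) (Q : ForwardFamily X Y n) :
    (k : ℕ) → k ≤ n + 1 → Measure ((∀ j : Fin k, X j) × (∀ j : Fin k, Y j))
  | 0, _ => Measure.dirac default
  | (k + 1), h =>
      let μ1 := (jointAux P Q k (by omega)) ⊗ₘ (P.p ⟨k, by omega⟩)
      let μ2 := μ1.map
          (fun t : ((∀ j : Fin k, X j) × (∀ j : Fin k, Y j)) × X k =>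
            (t.1.2, (Fin.snoc t.1.1 t.2 : ∀ j : Fin (k + 1), X j)))
      let μ3 := μ2 ⊗ₘ (Q.q ⟨k, by omega⟩)
      μ3.map
          (fun t : ((∀ j : Fin k, Y j) × (∀ j : Fin (k + 1), X j)) × Y k =>
            (t.1.2, (Fin.snoc t.1.1 t.2 : ∀ j : Fin (k + 1), Y j)))

/-- The joint measure `←P ⊗ →Q` on `X_{0,n} × Y_{0,n}`. -/
noncomputable def joint (P : FeedbackFamily X Y n) (Q : ForwardFamily X Y n) :
    Measure ((∀ j : Fin (n + 1), X j) × (∀ j : Fin (n + 1), Y j)) :=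
  jointAux P Q (n + 1) le_rfl

/-- The marginal `ν_{0,n}` of `←P ⊗ →Q` on `Y_{0,n}`. -/
noncomputable def nu (P : FeedbackFamily X Y n) (Q : ForwardFamily X Y n) :
    Measure (∀ j : Fin (n + 1), Y j) :=
  (joint P Q).map Prod.snd

/-- The measure `←P ⊗ λ` on `X_{0,n} × Y_{0,n}`, i.e. the measure
`←P_{0,n}(dx^n | y^{n-1}) ⊗ λ(dy^n)`. -/
noncomputable def backProd (P : FeedbackFamily X Y n) (lam : Measure (∀ j : Fin (n + 1), Y j)) :
    Measure ((∀ j : Fin (n + 1), X j) × (∀ j : Fin (n + 1), Y j)) :=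
  (lam ⊗ₘ ((back P n le_rfl).comap (restr n) (measurable_restr n))).map Prod.swap

open Classical in
/-- Kullback-Leibler divergence (relative entropy) `D(μ ‖ ν)`, with the convention
`D(μ ‖ ν) = ∞` when absolute continuity fails. -/
noncomputable def KL {Z : Type*} [MeasurableSpace Z] (μ ν : Measure Z) : ℝ≥0∞ :=
  if μ ≪ ν ∧ Integrable (llr μ ν) μ then ENNReal.ofReal (∫ z, llr μ ν z ∂μ) else ⊤

/-- Directed information `I(←P, →Q) = D(←P ⊗ →Q ‖ ←P ⊗ ν_{0,n})`. -/
noncomputable def DI (P : FeedbackFamily X Y n) (Q : ForwardFamily X Y n) : ℝ≥0∞ :=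
  KL (joint P Q) (backProd P (nu P Q))

/-- Weak convergence of a sequence of measures: integrals of every bounded continuous
real-valued function converge. -/
def WeakTendsto {Z : Type*} [MeasurableSpace Z] [TopologicalSpace Z]
    (μ : ℕ → Measure Z) (μ0 : Measure Z) : Prop :=
  ∀ f : BoundedContinuousFunction Z ℝ,
    Tendsto (fun α => ∫ z, f z ∂(μ α)) atTop (nhds (∫ z, f z ∂μ0))

/-- Uniform tightness of a family of measures. -/
def UniformlyTight {Z : Type*} [MeasurableSpace Z] [TopologicalSpace Z]
    (M : Set (Measure Z)) : Prop :=
  ∀ ε : ℝ≥0∞, 0 < ε → ∃ K : Set Z, IsCompact K ∧ ∀ μ ∈ M, 1 - ε ≤ μ K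

/-- The marginal `π_i` of `←P ⊗ →Q` on `X_{0,i} × Y_{0,i-1}`. -/
noncomputable def margin (P : FeedbackFamily X Y n) (Q : ForwardFamily X Y n) (i : Fin (n + 1)) :
    Measure ((∀ j : Fin ((i : ℕ) + 1), X j) × (∀ j : Fin (i : ℕ), Y j)) :=
  (joint P Q).map (fun t =>
    ((fun j : Fin ((i : ℕ) + 1) => t.1 (Fin.castLE i.isLt j)),
     (fun j : Fin (i : ℕ) => t.2 (Fin.castLE i.isLt.le j))))

/-- The iterated product measure of a tuple of kernels `(λ_0, …, λ_n)`,
`λ_i : Y_{0,i-1} → Y_i`, on prefixes of length `k`. -/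
noncomputable def chain {Z : ℕ → Type*} [∀ i, MeasurableSpace (Z i)] {n : ℕ}
    (lam : ∀ i : Fin (n + 1), Kernel (∀ j : Fin (i : ℕ), Z j) (Z i)) :
    (k : ℕ) → k ≤ n + 1 → Measure (∀ j : Fin k, Z j)
  | 0, _ => Measure.dirac default
  | (k + 1), h =>
      ((chain lam k (by omega)) ⊗ₘ (lam ⟨k, by omega⟩)).map
        (fun t : (∀ j : Fin k, Z j) × Z k => (Fin.snoc t.1 t.2 : ∀ j : Fin (k + 1), Z j))

/-- The joint measure `←S ⊗ →R` on `X_{0,n} × Y_{0,n}` determined by a reversed pair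
`(S, R)`; a reversed pair is formally a feedback family and a forward family with the
roles of `X` and `Y` interchanged. -/
noncomputable def revJoint (S : FeedbackFamily Y X n) (R : ForwardFamily Y X n) :
    Measure ((∀ j : Fin (n + 1), X j) × (∀ j : Fin (n + 1), Y j)) :=
  (joint S R).map Prod.swap

/-- `∫ log(dσ/dπ) dμ`, as an extended real number (integral of the positive part minus
integral of the negative part). -/
noncomputable def elogInt {Z : Type*} [MeasurableSpace Z] (σ π μ : Measure Z) : EReal :=
  ((∫⁻ z, ENNReal.ofReal (llr σ π z) ∂μ : ℝ≥0∞) : EReal) -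
    ((∫⁻ z, ENNReal.ofReal (-llr σ π z) ∂μ : ℝ≥0∞) : EReal)

/-- `∫ |log(dμ/dν)| dμ`. -/
noncomputable def absKL {Z : Type*} [MeasurableSpace Z] (μ ν : Measure Z) : ℝ≥0∞ :=
  ∫⁻ z, ENNReal.ofReal |llr μ ν z| ∂μ

section Topology

variable [∀ i, TopologicalSpace (X i)] [∀ i, TopologicalSpace (Y i)]

/-- Condition (CA): each `p_i` is weakly (Feller) continuous in the conditioning
variables `(x^{i-1}, y^{i-1})`. -/
def CondCA (P : FeedbackFamily X Y n) : Prop :=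
  ∀ (i : Fin (n + 1)) (g : BoundedContinuousFunction (X i) ℝ),
    Continuous (fun t : (∀ j : Fin (i : ℕ), X j) × (∀ j : Fin (i : ℕ), Y j) =>
      ∫ x, g x ∂(P.p i t))

/-- Condition (CB): each `q_i` is weakly (Feller) continuous in the conditioning
variables `(x^i, y^{i-1})`. -/
def CondCB (Q : ForwardFamily X Y n) : Prop :=
  ∀ (i : Fin (n + 1)) (g : BoundedContinuousFunction (Y i) ℝ),
    Continuous (fun t : (∀ j : Fin ((i : ℕ) + 1), X j) × (∀ j : Fin (i : ℕ), Y j) =>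
      ∫ y, g y ∂(Q.q i (t.2, t.1)))

end Topology

/-! The pointwise mixture `M_k` of the two causally conditioned kernels on prefixes of length
`k + 1` is again a Markov kernel, and the family `(M_k)` is consistent: the restriction of
`M_{k+1}` to its first `k + 1` coordinates is `M_k`, independently of the newest conditioning
variable, because this holds for each of the two kernels. On standard Borel spaces `M_{k+1}`
disintegrates along its last coordinate as `M_k ⊗ η_{k+1}` for a Markov kernel `η_{k+1}` that
conditions on the past of both sequences; these kernels form the required family, and induction
on `k` identifies its causally conditioned kernel with `M_k`. Mixing the `p_i` themselves would
not do, since the weights of the two components have to be updated along the past. The forward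
case is the same with the roles of the two sequences exchanged. -/

section KernelMix

variable {α β Ω : Type*} [MeasurableSpace α] [MeasurableSpace β] [MeasurableSpace Ω]

noncomputable def _root_.ProbabilityTheory.Kernel.mix (c₁ c₂ : ℝ≥0∞) (κ η : Kernel α β) :
    Kernel α β where
  toFun a := c₁ • κ a + c₂ • η a
  measurable' := Measure.measurable_of_measurable_coe _ fun s hs => by
    simp only [Measure.add_apply, Measure.smul_apply, smul_eq_mul]
    exact ((κ.measurable_coe hs).const_mul c₁).add ((η.measurable_coe hs).const_mul c₂)

@[simp]
lemma _root_.ProbabilityTheory.Kernel.mix_apply (c₁ c₂ : ℝ≥0∞) (κ η : Kernel α β) (a : α) :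
    κ.mix c₁ c₂ η a = c₁ • κ a + c₂ • η a := rfl

lemma _root_.ProbabilityTheory.Kernel.isMarkovKernel_mix {c₁ c₂ : ℝ≥0∞} (hc : c₁ + c₂ = 1)
    (κ η : Kernel α β) [IsMarkovKernel κ] [IsMarkovKernel η] : IsMarkovKernel (κ.mix c₁ c₂ η) :=
  ⟨fun a => ⟨by simp [hc]⟩⟩

lemma _root_.ProbabilityTheory.Kernel.map_mix (c₁ c₂ : ℝ≥0∞) (κ η : Kernel α β) {f : β → Ω}
    (hf : Measurable f) :
    (κ.mix c₁ c₂ η).map f = (κ.map f).mix c₁ c₂ (η.map f) := by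
  ext1 a
  simp only [Kernel.map_apply _ hf, Kernel.mix_apply, Measure.map_add _ _ hf, Measure.map_smul]

lemma _root_.ProbabilityTheory.Kernel.comap_mix (c₁ c₂ : ℝ≥0∞) (κ η : Kernel α β) {g : Ω → α}
    (hg : Measurable g) :
    (κ.mix c₁ c₂ η).comap g hg = (κ.comap g hg).mix c₁ c₂ (η.comap g hg) := rfl

lemma _root_.ProbabilityTheory.Kernel.exists_isMarkovKernel_fst_compProd_eq
    [StandardBorelSpace Ω] [MeasurableSpace.CountableOrCountablyGenerated α β]
    (κ : Kernel α (β × Ω)) [IsMarkovKernel κ] :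
    ∃ η : Kernel (α × β) Ω, IsMarkovKernel η ∧ κ.fst ⊗ₖ η = κ := by
  by_cases hΩ : Nonempty Ω
  · exact ⟨κ.condKernel, inferInstance, κ.disintegrate κ.condKernel⟩
  · -- A Markov kernel into an empty space has an empty domain.
    have : IsEmpty Ω := not_nonempty_iff.mp hΩ
    have : IsEmpty α := ⟨fun a => IsProbabilityMeasure.ne_zero (κ a) (Subsingleton.elim _ _)⟩
    exact ⟨0, ⟨fun t => isEmptyElim t.1⟩, Kernel.ext fun a => isEmptyElim a⟩

end KernelMix

section Prefix

variable {Z : ℕ → Type*}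

def splitLast (k : ℕ) (z : ∀ j : Fin (k + 1), Z j) : (∀ j : Fin k, Z j) × Z k :=
  (restr k z, z (Fin.last k))

lemma measurable_splitLast [∀ i, MeasurableSpace (Z i)] (k : ℕ) :
    Measurable (splitLast (Z := Z) k) :=
  (measurable_restr k).prodMk (measurable_pi_apply _)

lemma measurable_snoc_default [∀ i, MeasurableSpace (Z i)] :
    Measurable (fun z : Z 0 => (Fin.snoc default z : ∀ j : Fin 1, Z j)) :=
  (measurable_finSnoc 0).comp (measurable_const.prodMk measurable_id)

lemma restr_comp_snoc (k : ℕ) :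
    restr k ∘ (fun t : (∀ j : Fin k, Z j) × Z k => (Fin.snoc t.1 t.2 : ∀ j : Fin (k + 1), Z j)) =
      Prod.fst := by
  funext t j
  exact Fin.snoc_castSucc (α := fun j => Z j) ..

lemma snoc_comp_splitLast (k : ℕ) :
    (fun t : (∀ j : Fin k, Z j) × Z k => (Fin.snoc t.1 t.2 : ∀ j : Fin (k + 1), Z j)) ∘
      splitLast k = id :=
  funext Fin.snoc_init_self

lemma exists_isMarkovKernel_map_snoc_compProd_eq {α : Type*} [MeasurableSpace α]
    [∀ i, MeasurableSpace (Z i)] [∀ i, StandardBorelSpace (Z i)] {k : ℕ}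
    (κ : Kernel α (∀ j : Fin (k + 1), Z j)) [IsMarkovKernel κ] :
    ∃ η : Kernel (α × ∀ j : Fin k, Z j) (Z k), IsMarkovKernel η ∧
      (κ.map (restr k) ⊗ₖ η).map
        (fun t : (∀ j : Fin k, Z j) × Z k => (Fin.snoc t.1 t.2 : ∀ j : Fin (k + 1), Z j)) = κ := by
  have := Kernel.IsMarkovKernel.map κ (measurable_splitLast k)
  obtain ⟨η, hη, hκ⟩ := Kernel.exists_isMarkovKernel_fst_compProd_eq (κ.map (splitLast k))
  refine ⟨η, hη, ?_⟩
  rw [Kernel.fst_eq, ← Kernel.map_comp_right _ (measurable_splitLast k) measurable_fst,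
    show Prod.fst ∘ splitLast k = restr (Z := Z) k from rfl] at hκ
  rw [hκ, ← Kernel.map_comp_right _ (measurable_splitLast k) (measurable_finSnoc k),
    snoc_comp_splitLast, Kernel.map_id]

end Prefix

section Mixture

lemma isMarkovKernel_back (P : FeedbackFamily X Y n) :
    ∀ k (hk : k ≤ n), IsMarkovKernel (back P k hk)
  | 0, _ => by
    have := P.markov ⟨0, Nat.succ_pos n⟩
    rw [back]
    exact Kernel.IsMarkovKernel.map _ measurable_snoc_default
  | k + 1, hk => by
    have := isMarkovKernel_back P k (by omega)
    have := P.markov ⟨k + 1, by omega⟩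
    rw [back]
    exact Kernel.IsMarkovKernel.map _ (measurable_finSnoc (k + 1))

lemma isMarkovKernel_fwd (Q : ForwardFamily X Y n) :
    ∀ k (hk : k ≤ n), IsMarkovKernel (fwd Q k hk)
  | 0, _ => by
    have := Q.markov ⟨0, Nat.succ_pos n⟩
    rw [fwd]
    exact Kernel.IsMarkovKernel.map _ measurable_snoc_default
  | k + 1, hk => by
    have := isMarkovKernel_fwd Q k (by omega)
    have := Q.markov ⟨k + 1, by omega⟩
    rw [fwd]
    exact Kernel.IsMarkovKernel.map _ (measurable_finSnoc (k + 1))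

lemma map_back_succ_restr (P : FeedbackFamily X Y n) (k : ℕ) (hk : k + 1 ≤ n) :
    (back P (k + 1) hk).map (restr (k + 1)) =
      (back P k (by omega)).comap (restr k) (measurable_restr k) := by
  have := isMarkovKernel_back P k (by omega)
  have := P.markov ⟨k + 1, by omega⟩
  rw [back, ← Kernel.map_comp_right _ (measurable_finSnoc (k + 1)) (measurable_restr (k + 1)),
    restr_comp_snoc, ← Kernel.fst_eq, Kernel.fst_compProd]

lemma map_fwd_succ_restr (Q : ForwardFamily X Y n) (k : ℕ) (hk : k + 1 ≤ n) :
    (fwd Q (k + 1) hk).map (restr (k + 1)) =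
      (fwd Q k (by omega)).comap (restr (k + 1)) (measurable_restr (k + 1)) := by
  have := isMarkovKernel_fwd Q k (by omega)
  have := Q.markov ⟨k + 1, by omega⟩
  rw [fwd, ← Kernel.map_comp_right _ (measurable_finSnoc (k + 1)) (measurable_restr (k + 1)),
    restr_comp_snoc, ← Kernel.fst_eq, Kernel.fst_compProd]

theorem exists_back_eq_mix [∀ i, StandardBorelSpace (X i)] (P₁ P₂ : FeedbackFamily X Y n)
    {c₁ c₂ : ℝ≥0∞} (hc : c₁ + c₂ = 1) :
    ∃ P : FeedbackFamily X Y n, ∀ k (hk : k ≤ n),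
      back P k hk = (back P₁ k hk).mix c₁ c₂ (back P₂ k hk) := by
  have hM k (hk : k ≤ n) : IsMarkovKernel ((back P₁ k hk).mix c₁ c₂ (back P₂ k hk)) := by
    have := isMarkovKernel_back P₁ k hk
    have := isMarkovKernel_back P₂ k hk
    exact Kernel.isMarkovKernel_mix hc _ _
  choose η hη hη_eq using fun k (hk : k + 1 ≤ n) =>
    have := hM (k + 1) hk
    exists_isMarkovKernel_map_snoc_compProd_eq
      ((back P₁ (k + 1) hk).mix c₁ c₂ (back P₂ (k + 1) hk))
  let P : FeedbackFamily X Y n :=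
    { p := fun
        | ⟨0, h⟩ => (P₁.p ⟨0, h⟩).mix c₁ c₂ (P₂.p ⟨0, h⟩)
        | ⟨k + 1, hk⟩ => (η k (by omega)).comap Prod.swap measurable_swap
      markov := fun
        | ⟨0, h⟩ => by
          have := P₁.markov ⟨0, h⟩
          have := P₂.markov ⟨0, h⟩
          exact Kernel.isMarkovKernel_mix hc _ _
        | ⟨k + 1, hk⟩ => by
          have := hη k (by omega)
          exact Kernel.IsMarkovKernel.comap _ _ }
  refine ⟨P, fun k hk => ?_⟩
  induction k with
  | zero =>
    rw [back, back, back, ← Kernel.map_mix _ _ _ _ measurable_snoc_default]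
    rfl
  | succ k ih =>
    rw [back, ih (by omega), Kernel.comap_mix, ← map_back_succ_restr P₁, ← map_back_succ_restr P₂,
      ← Kernel.map_mix _ _ _ _ (measurable_restr _)]
    exact hη_eq k hk

theorem exists_fwd_eq_mix [∀ i, StandardBorelSpace (Y i)] (Q₁ Q₂ : ForwardFamily X Y n)
    {c₁ c₂ : ℝ≥0∞} (hc : c₁ + c₂ = 1) :
    ∃ Q : ForwardFamily X Y n, ∀ k (hk : k ≤ n),
      fwd Q k hk = (fwd Q₁ k hk).mix c₁ c₂ (fwd Q₂ k hk) := by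
  have hM k (hk : k ≤ n) : IsMarkovKernel ((fwd Q₁ k hk).mix c₁ c₂ (fwd Q₂ k hk)) := by
    have := isMarkovKernel_fwd Q₁ k hk
    have := isMarkovKernel_fwd Q₂ k hk
    exact Kernel.isMarkovKernel_mix hc _ _
  choose η hη hη_eq using fun k (hk : k + 1 ≤ n) =>
    have := hM (k + 1) hk
    exists_isMarkovKernel_map_snoc_compProd_eq
      ((fwd Q₁ (k + 1) hk).mix c₁ c₂ (fwd Q₂ (k + 1) hk))
  let Q : ForwardFamily X Y n :=
    { q := fun
        | ⟨0, h⟩ => (Q₁.q ⟨0, h⟩).mix c₁ c₂ (Q₂.q ⟨0, h⟩)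
        | ⟨k + 1, hk⟩ => (η k (by omega)).comap Prod.swap measurable_swap
      markov := fun
        | ⟨0, h⟩ => by
          have := Q₁.markov ⟨0, h⟩
          have := Q₂.markov ⟨0, h⟩
          exact Kernel.isMarkovKernel_mix hc _ _
        | ⟨k + 1, hk⟩ => by
          have := hη k (by omega)
          exact Kernel.IsMarkovKernel.comap _ _ }
  refine ⟨Q, fun k hk => ?_⟩
  induction k with
  | zero =>
    rw [fwd, fwd, fwd, ← Kernel.map_mix _ _ _ _ measurable_snoc_default]
    rfl
  | succ k ih =>
    rw [fwd, ih (by omega), Kernel.comap_mix, ← map_fwd_succ_restr Q₁, ← map_fwd_succ_restr Q₂,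
      ← Kernel.map_mix _ _ _ _ (measurable_restr _)]
    exact hη_eq k hk

end Mixture

section Statements

variable {X Y : ℕ → Type*} {n : ℕ}
  [∀ i, TopologicalSpace (X i)] [∀ i, MeasurableSpace (X i)] [∀ i, BorelSpace (X i)]
  [∀ i, PolishSpace (X i)]
  [∀ i, TopologicalSpace (Y i)] [∀ i, MeasurableSpace (Y i)] [∀ i, BorelSpace (Y i)]
  [∀ i, PolishSpace (Y i)]

/-- The set of causally conditioned kernels arising from feedback
families and the set arising from forward families are both convex: any pointwise convex
combination of two causally conditioned kernels is again the causally conditioned kernel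
of some family. -/
theorem convexity_of_causally_conditioned_kernels :
    (∀ (P1 P2 : FeedbackFamily X Y n) (lam : ℝ), lam ∈ Set.Ioo (0 : ℝ) 1 →
      ∃ P : FeedbackFamily X Y n, ∀ y : ∀ j : Fin n, Y j,
        back P n le_rfl y =
          ENNReal.ofReal lam • back P1 n le_rfl y +
            ENNReal.ofReal (1 - lam) • back P2 n le_rfl y) ∧
    (∀ (Q1 Q2 : ForwardFamily X Y n) (lam : ℝ), lam ∈ Set.Ioo (0 : ℝ) 1 →
      ∃ Q : ForwardFamily X Y n, ∀ x : ∀ j : Fin (n + 1), X j,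
        fwd Q n le_rfl x =
          ENNReal.ofReal lam • fwd Q1 n le_rfl x +
            ENNReal.ofReal (1 - lam) • fwd Q2 n le_rfl x) := by
  have hc {lam : ℝ} (hlam : lam ∈ Set.Ioo (0 : ℝ) 1) :
      ENNReal.ofReal lam + ENNReal.ofReal (1 - lam) = 1 := by
    rw [← ENNReal.ofReal_add hlam.1.le (by linarith [hlam.2]), add_sub_cancel, ENNReal.ofReal_one]
  constructor
  · intro P₁ P₂ lam hlam
    obtain ⟨P, hP⟩ := exists_back_eq_mix P₁ P₂ (hc hlam)
    exact ⟨P, fun y => by rw [hP, Kernel.mix_apply]⟩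
  · intro Q₁ Q₂ lam hlam
    obtain ⟨Q, hQ⟩ := exists_fwd_eq_mix Q₁ Q₂ (hc hlam)
    exact ⟨Q, fun x => by rw [hQ, Kernel.mix_apply]⟩

end Statements

end PaperDI
end

section
/- Assume each Y_i (0 ≤ i ≤ n) is a compact Polish space and each X_i is a Polish space, and let P = (p_i) be a feedback family satisfying condition (CA). Then the family of probability measures { ←P_{0,n}(· | y^{n-1}) : y^{n-1} ∈ Y_{0,n-1} } on X_{0,n} is uniformly tight; more precisely, for every ε > 0 there exist compact sets K_i ⊆ X_i (0 ≤ i ≤ n) such that ←P_{0,n}(K_0 × ⋯ × K_n | y^{n-1}) ≥ 1 − ε for every y^{n-1} ∈ Y_{0,n-1}. Consequently this family is relatively compact in the topology of weak convergence of probability measures. -/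
/-!
Condition (CA) says that every `p_i` is a Feller kernel: weakly continuous as a map into the
probability measures. Feller kernels are stable under pullback and pushforward along continuous
maps and under the composition-product `⊗ₖ`, since integrating a bounded jointly continuous
function in one variable against a Feller kernel leaves a bounded jointly continuous function
(weak convergence of `δ_{b_k} ⊗ μ_{b_k}` to `δ_b ⊗ μ_b`). Hence `←P_{0,n}` is Feller, and its range
over the compact space `Y_{0,n-1}` is a compact set of probability measures on a Polish space,
which is tight by the converse half of Prokhorov's theorem. The coordinate projections of one
compact set give the compact rectangle, and sequential compactness of `Y_{0,n-1}` together with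
continuity gives the weakly convergent subsequences.
-/

open MeasureTheory ProbabilityTheory Filter
open scoped ENNReal NNReal

open TopologicalSpace
open scoped BoundedContinuousFunction

namespace ProbabilityTheory.Kernel

variable {α β γ : Type*} [MeasurableSpace α] [MeasurableSpace β] [MeasurableSpace γ]
  [TopologicalSpace α] [TopologicalSpace β] [TopologicalSpace γ]

def IsFeller (κ : Kernel α β) : Prop :=
  ∀ f : β →ᵇ ℝ, Continuous fun a => ∫ b, f b ∂κ a

noncomputable def toProbabilityMeasure (κ : Kernel α β) [IsMarkovKernel κ] (a : α) :
    ProbabilityMeasure β :=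
  ⟨κ a, inferInstance⟩

namespace IsFeller

variable {κ : Kernel α β}

lemma continuous_toProbabilityMeasure [OpensMeasurableSpace β] [IsMarkovKernel κ]
    (hκ : κ.IsFeller) : Continuous κ.toProbabilityMeasure :=
  ProbabilityMeasure.continuous_iff_forall_continuous_integral.2 hκ

lemma comap (hκ : κ.IsFeller) {g : γ → α} (hg : Measurable g) (hg' : Continuous g) :
    (κ.comap g hg).IsFeller :=
  fun f => (hκ f).comp hg'

lemma map [OpensMeasurableSpace β] [BorelSpace γ] (hκ : κ.IsFeller) {f : β → γ}
    (hf : Continuous f) : (κ.map f).IsFeller := by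
  intro g
  have h : ∀ a, ∫ c, g c ∂(κ.map f) a = ∫ b, g (f b) ∂κ a := fun a => by
    rw [Kernel.map_apply _ hf.measurable,
      integral_map hf.measurable.aemeasurable g.continuous.aestronglyMeasurable]
  rw [funext h]
  exact hκ (g.compContinuous ⟨f, hf⟩)

lemma isTightMeasureSet_range [CompactSpace α] [PolishSpace β] [BorelSpace β] [IsMarkovKernel κ]
    (hκ : κ.IsFeller) : IsTightMeasureSet (Set.range κ) := by
  let := upgradeIsCompletelyMetrizable β
  have hS := isCompact_range hκ.continuous_toProbabilityMeasure
  have hrange : ((↑) : ProbabilityMeasure β → Measure β) '' Set.range κ.toProbabilityMeasure =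
      Set.range κ := by
    rw [← Set.range_comp]
    rfl
  rw [← hrange]
  exact isTightMeasureSet_of_isCompact_closure (by rwa [hS.isClosed.closure_eq])

variable [SecondCountableTopology α] [PseudoMetrizableSpace α] [OpensMeasurableSpace α]
  [SecondCountableTopology β] [PseudoMetrizableSpace β] [OpensMeasurableSpace β]
  [SecondCountableTopology γ] [PseudoMetrizableSpace γ] [OpensMeasurableSpace γ]

lemma continuous_integral_prod [IsMarkovKernel κ] (hκ : κ.IsFeller) (f : α × β →ᵇ ℝ) :
    Continuous fun a => ∫ b, f (a, b) ∂κ a := by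
  have h : ∀ a, ∫ b, f (a, b) ∂κ a =
      ∫ p, f p ∂((diracProba a).prod (κ.toProbabilityMeasure a) : Measure (α × β)) := fun a => by
    rw [ProbabilityMeasure.toMeasure_prod, diracProba, ProbabilityMeasure.coe_mk,
      Measure.dirac_prod, integral_map (by fun_prop) f.continuous.aestronglyMeasurable]
    rfl
  rw [funext h]
  exact (ProbabilityMeasure.continuous_integral_boundedContinuousFunction f).comp
    (ProbabilityMeasure.continuous_prod.comp
      (continuous_diracProba.prodMk hκ.continuous_toProbabilityMeasure))

lemma compProd [IsMarkovKernel κ] {η : Kernel (α × β) γ} [IsMarkovKernel η]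
    (hκ : κ.IsFeller) (hη : η.IsFeller) : (κ ⊗ₖ η).IsFeller := by
  intro f
  let g : (α × β) × γ →ᵇ ℝ := f.compContinuous ⟨fun q => (q.1.2, q.2), by fun_prop⟩
  let F : α × β →ᵇ ℝ := .ofNormedAddCommGroup (fun p => ∫ c, g (p, c) ∂η p)
    (hη.continuous_integral_prod g) ‖f‖ fun p =>
      ((g.compContinuous ⟨Prod.mk p, by fun_prop⟩).norm_integral_le_norm _).trans
        ((g.norm_compContinuous_le _).trans (f.norm_compContinuous_le _))
  have h : ∀ a, ∫ z, f z ∂(κ ⊗ₖ η) a = ∫ b, F (a, b) ∂κ a := fun a =>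
    integral_compProd (f.integrable _)
  rw [funext h]
  exact hκ.continuous_integral_prod F

end IsFeller

end ProbabilityTheory.Kernel

namespace PaperDI

variable {X Y : ℕ → Type*} {n : ℕ} [∀ i, MeasurableSpace (X i)] [∀ i, MeasurableSpace (Y i)]

instance isMarkovKernel_back_s6 (P : FeedbackFamily X Y n) :
    ∀ k (hk : k ≤ n), IsMarkovKernel (back P k hk)
  | 0, _ => by
    have := P.markov ⟨0, by omega⟩
    rw [back]
    exact Kernel.IsMarkovKernel.map _
      ((measurable_finSnoc 0).comp (measurable_const.prodMk measurable_id))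
  | k + 1, _ => by
    have := isMarkovKernel_back_s6 P k (by omega)
    have := P.markov ⟨k + 1, by omega⟩
    rw [back]
    exact Kernel.IsMarkovKernel.map _ (measurable_finSnoc (k + 1))

lemma continuous_finSnoc {Z : ℕ → Type*} [∀ i, TopologicalSpace (Z i)] (k : ℕ) :
    Continuous (fun p : (∀ j : Fin k, Z j) × Z k =>
      (Fin.snoc p.1 p.2 : ∀ j : Fin (k + 1), Z j)) :=
  continuous_fst.finSnoc (A := fun j : Fin (k + 1) => Z j) continuous_snd

lemma isFeller_back [∀ i, TopologicalSpace (X i)] [∀ i, TopologicalSpace (Y i)]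
    [∀ i, PolishSpace (X i)] [∀ i, BorelSpace (X i)]
    [∀ i, PolishSpace (Y i)] [∀ i, BorelSpace (Y i)]
    (P : FeedbackFamily X Y n) (hCA : CondCA P) : ∀ k (hk : k ≤ n), (back P k hk).IsFeller
  | 0, _ => fun _ => continuous_of_const fun y y' => by rw [Subsingleton.elim y y']
  | k + 1, hk => by
    have := P.markov ⟨k + 1, by omega⟩
    rw [back]
    refine (Kernel.IsFeller.compProd ?_ ?_).map (continuous_finSnoc (k + 1))
    · exact (isFeller_back P hCA k (by omega)).comap _ (continuous_pi fun _ => continuous_apply _)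
    · exact Kernel.IsFeller.comap (hCA ⟨k + 1, by omega⟩) _ (continuous_snd.prodMk continuous_fst)

lemma uniformlyTight_of_isTightMeasureSet {Z : Type*} [MeasurableSpace Z] [TopologicalSpace Z]
    {M : Set (Measure Z)} (hM : IsTightMeasureSet M) (hprob : ∀ μ ∈ M, IsProbabilityMeasure μ) :
    UniformlyTight M := by
  intro ε hε
  obtain ⟨K, hK, hKc⟩ := isTightMeasureSet_iff_exists_isCompact_measure_compl_le.1 hM ε hε
  refine ⟨K, hK, fun μ hμ => tsub_le_iff_right.2 ?_⟩
  calc (1 : ℝ≥0∞) = μ (K ∪ Kᶜ) := by rw [Set.union_compl_self, (hprob μ hμ).measure_univ]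
    _ ≤ μ K + μ Kᶜ := measure_union_le _ _
    _ ≤ μ K + ε := by gcongr; exact hKc μ hμ

lemma UniformlyTight.exists_isCompact_pi {ι : Type*} {Z : ι → Type*}
    [∀ i, MeasurableSpace (Z i)] [∀ i, TopologicalSpace (Z i)] {M : Set (Measure (∀ i, Z i))}
    (hM : UniformlyTight M) {ε : ℝ≥0∞} (hε : 0 < ε) :
    ∃ K : ∀ i, Set (Z i), (∀ i, IsCompact (K i)) ∧ ∀ μ ∈ M, 1 - ε ≤ μ {x | ∀ i, x i ∈ K i} := by
  obtain ⟨K, hK, hμK⟩ := hM ε hε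
  exact ⟨fun i => Function.eval i '' K, fun i => hK.image (continuous_apply i),
    fun μ hμ => (hμK μ hμ).trans (measure_mono fun x hx i => ⟨x, hx, rfl⟩)⟩

section Statements

variable {X Y : ℕ → Type*} {n : ℕ}
  [∀ i, TopologicalSpace (X i)] [∀ i, MeasurableSpace (X i)] [∀ i, BorelSpace (X i)]
  [∀ i, PolishSpace (X i)]
  [∀ i, TopologicalSpace (Y i)] [∀ i, MeasurableSpace (Y i)] [∀ i, BorelSpace (Y i)]
  [∀ i, PolishSpace (Y i)]

/-- If the `Y_i` are compact Polish, the `X_i` Polish, and the feedback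
family `P` satisfies (CA), the family `{←P_{0,n}(· | y^{n-1}) : y^{n-1}}` is uniformly
tight (with compact rectangles), and hence relatively compact for weak convergence. -/
theorem back_kernel_family_uniformly_tight [∀ i, CompactSpace (Y i)]
    (P : FeedbackFamily X Y n) (hCA : CondCA P) :
    (∀ ε : ℝ≥0∞, 0 < ε → ∃ K : ∀ i : Fin (n + 1), Set (X i),
      (∀ i, IsCompact (K i)) ∧
        ∀ y : ∀ j : Fin n, Y j, 1 - ε ≤ back P n le_rfl y {x | ∀ i, x i ∈ K i}) ∧
    UniformlyTight {μ : Measure (∀ j : Fin (n + 1), X j) |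
        ∃ y : ∀ j : Fin n, Y j, μ = back P n le_rfl y} ∧
    ∀ y : ℕ → ∀ j : Fin n, Y j,
      ∃ (φ : ℕ → ℕ) (μ0 : Measure (∀ j : Fin (n + 1), X j)),
        StrictMono φ ∧ IsProbabilityMeasure μ0 ∧
          WeakTendsto (fun k => back P n le_rfl (y (φ k))) μ0 := by
  have hFeller := isFeller_back P hCA n le_rfl
  have hTight : UniformlyTight {μ | ∃ y : ∀ j : Fin n, Y j, μ = back P n le_rfl y} := by
    have := uniformlyTight_of_isTightMeasureSet hFeller.isTightMeasureSet_range
      (by rintro _ ⟨y, rfl⟩; infer_instance)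
    simpa only [Set.range, eq_comm] using this
  refine ⟨fun ε hε => ?_, hTight, fun y => ?_⟩
  · obtain ⟨K, hK, hμK⟩ := hTight.exists_isCompact_pi hε
    exact ⟨K, hK, fun y => hμK _ ⟨y, rfl⟩⟩
  · obtain ⟨y0, φ, hφ, hconv⟩ := CompactSpace.tendsto_subseq y
    exact ⟨φ, back P n le_rfl y0, hφ, inferInstance,
      fun f => ((hFeller f).tendsto y0).comp hconv⟩

end Statements

end PaperDI
end

section
/- Let Y and X be Polish spaces and let κ be a Markov kernel from Y to X that is weakly (Feller) continuous, i.e., for every bounded continuous g : X → ℝ the map y ↦ ∫_X g(x) κ(y)(dx) is continuous on Y. If ν_α (α = 1,2,…) and ν₀ are Borel probability measures on Y such that ν_α → ν₀ weakly, then the composition–product measures ν_α ⊗ κ on Y × X, defined by (ν_α ⊗ κ)(B × A) = ∫_B κ(y)(A) ν_α(dy) for Borel sets B ⊆ Y and A ⊆ X, converge weakly to ν₀ ⊗ κ. -/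
/-! By Fubini, `∫ f d(ν ⊗ₘ κ) = ∫ F dν` with `F y = ∫ f (y, x) ∂(κ y)`, so everything reduces to
`F` being bounded and continuous. Continuity holds because `F y` is the integral of `f` against
`δ_y ⊗ κ y`, and the maps `y ↦ δ_y`, `y ↦ κ y` (the Feller property) and `(μ, ν) ↦ μ.prod ν` are
all continuous for the weak topology on probability measures over separable metrizable spaces. -/

open MeasureTheory ProbabilityTheory Filter
open scoped ENNReal NNReal

namespace PaperDI

variable (X Y : ℕ → Type*) [∀ i, MeasurableSpace (X i)] [∀ i, MeasurableSpace (Y i)]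

variable {X Y} {n : ℕ}

section FellerKernel

open BoundedContinuousFunction TopologicalSpace

variable {𝒴 𝒳 : Type*}
  [TopologicalSpace 𝒴] [MeasurableSpace 𝒴] [TopologicalSpace 𝒳] [MeasurableSpace 𝒳]
  [OpensMeasurableSpace 𝒳] (κ : Kernel 𝒴 𝒳) [IsMarkovKernel κ]

lemma continuous_integral_prodMk_of_continuous_integral
    [OpensMeasurableSpace 𝒴] [SecondCountableTopology 𝒴] [PseudoMetrizableSpace 𝒴]
    [SecondCountableTopology 𝒳] [PseudoMetrizableSpace 𝒳]
    (hκ : ∀ g : 𝒳 →ᵇ ℝ, Continuous fun y => ∫ x, g x ∂(κ y)) (f : 𝒴 × 𝒳 →ᵇ ℝ) :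
    Continuous fun y => ∫ x, f (y, x) ∂(κ y) := by
  let κP : 𝒴 → ProbabilityMeasure 𝒳 := fun y => ⟨κ y, inferInstance⟩
  have hκP : Continuous κP := ProbabilityMeasure.continuous_iff_forall_continuous_integral.2 hκ
  have h := (ProbabilityMeasure.continuous_integral_boundedContinuousFunction f).comp
    (ProbabilityMeasure.continuous_prod.comp (continuous_diracProba.prodMk hκP))
  convert h using 2 with y
  change _ = ∫ p, f p ∂((Measure.dirac y).prod (κ y))
  rw [Measure.dirac_prod,
    integral_map measurable_prodMk_left.aemeasurable f.continuous.aestronglyMeasurable]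

lemma norm_integral_prodMk_le (f : 𝒴 × 𝒳 →ᵇ ℝ) (y : 𝒴) :
    ‖∫ x, f (y, x) ∂(κ y)‖ ≤ ‖f‖ :=
  ((f.compContinuous ⟨Prod.mk y, by fun_prop⟩).norm_integral_le_norm (κ y)).trans
    (norm_compContinuous_le _ _)

lemma exists_integral_compProd_eq_integral
    [OpensMeasurableSpace 𝒴] [SecondCountableTopology 𝒴] [PseudoMetrizableSpace 𝒴]
    [SecondCountableTopology 𝒳] [PseudoMetrizableSpace 𝒳]
    (hκ : ∀ g : 𝒳 →ᵇ ℝ, Continuous fun y => ∫ x, g x ∂(κ y)) (f : 𝒴 × 𝒳 →ᵇ ℝ) :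
    ∃ F : 𝒴 →ᵇ ℝ, ∀ (μ : Measure 𝒴) [IsFiniteMeasure μ], ∫ p, f p ∂(μ ⊗ₘ κ) = ∫ y, F y ∂μ :=
  ⟨.ofNormedAddCommGroup _ (continuous_integral_prodMk_of_continuous_integral κ hκ f) ‖f‖
      (norm_integral_prodMk_le κ f),
    fun μ _ => Measure.integral_compProd (f.integrable (μ ⊗ₘ κ))⟩

end FellerKernel

section Statements

variable {X Y : ℕ → Type*} {n : ℕ}
  [∀ i, TopologicalSpace (X i)] [∀ i, MeasurableSpace (X i)] [∀ i, BorelSpace (X i)]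
  [∀ i, PolishSpace (X i)]
  [∀ i, TopologicalSpace (Y i)] [∀ i, MeasurableSpace (Y i)] [∀ i, BorelSpace (Y i)]
  [∀ i, PolishSpace (Y i)]

/-- If `κ` is a weakly (Feller) continuous Markov kernel between Polish
spaces and `ν_α → ν₀` weakly, then the composition-product measures `ν_α ⊗ₘ κ` converge
weakly to `ν₀ ⊗ₘ κ`. -/
theorem weakTendsto_compProd_of_weakTendsto {𝒴 𝒳 : Type*}
    [TopologicalSpace 𝒴] [MeasurableSpace 𝒴] [BorelSpace 𝒴] [PolishSpace 𝒴]
    [TopologicalSpace 𝒳] [MeasurableSpace 𝒳] [BorelSpace 𝒳] [PolishSpace 𝒳]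
    (κ : Kernel 𝒴 𝒳) (hmk : IsMarkovKernel κ)
    (hκ : ∀ g : BoundedContinuousFunction 𝒳 ℝ, Continuous fun y => ∫ x, g x ∂(κ y))
    (ν : ℕ → Measure 𝒴) (ν0 : Measure 𝒴)
    (hprob : ∀ α, IsProbabilityMeasure (ν α)) (hprob0 : IsProbabilityMeasure ν0)
    (hconv : WeakTendsto ν ν0) :
    WeakTendsto (fun α => (ν α) ⊗ₘ κ) (ν0 ⊗ₘ κ) := by
  intro f
  obtain ⟨F, hF⟩ := exists_integral_compProd_eq_integral κ hκ f
  convert hconv F using 2 with α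
  · exact hF (ν α)
  · exact hF ν0

end Statements

end PaperDI
end
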